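/- arXiv:0906.3438 — 4 statements merged into one kernel-verified Lean document; each statement's English description precedes it below -/
import Mathlib

section
/- Let ξ : U → ℝ be linear and u ∈ U with ξ(u) < 0. Suppose for some q > 0, t₀ > 0, constants β₁ ∈ [0,1), β₂ ≥ 0, κ > q, and functions Ω, G : the inequality −ξ(t·u) ≤ β₁·(Ω(u† + t·u) − Ω(u†) − ξ(t·u)) + β₂·G(t)^κ holds for all t ∈ (0, t₀], the limits L_Ω := lim_{t→0⁺} (Ω(u† + t·u) − Ω(u†))/t and L_S := lim_{t→0⁺} G(t)^q / t exist (L_S finite), and L_Ω = ξ(u). Then a contradiction follows; hence such a variational inequality can only hold with κ ≤ q. -/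
/-!
Dividing the variational inequality by `t` gives
`-ξ u ≤ β₁ ((Ω (u† + t u) - Ω u†) / t - ξ u) + β₂ G(t)^κ / t`.
The first term tends to `0` because the directional derivative of `Ω` is `ξ u`, and the second
because `G(t)^κ / t = (G(t)^q / t)^(κ/q) · t^(κ/q - 1)` with `G(t)^q / t` convergent and `κ/q > 1`.
Hence `-ξ u ≤ 0`, contradicting `ξ u < 0`.
-/

open Filter Topology Set

lemma rpow_div_eq_rpow_div_rpow_mul_rpow {g t q κ : ℝ} (hg : 0 ≤ g) (ht : 0 < t) (hq : q ≠ 0) :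
    g ^ κ / t = (g ^ q / t) ^ (κ / q) * t ^ (κ / q - 1) := by
  rw [Real.div_rpow (Real.rpow_nonneg hg q) ht.le, ← Real.rpow_mul hg, mul_div_cancel₀ κ hq,
    Real.rpow_sub ht, Real.rpow_one]
  field_simp

lemma tendsto_rpow_div_nhdsGT_zero_of_tendsto_rpow_div {G : ℝ → ℝ} {q κ L : ℝ}
    (hG : ∀ᶠ t in 𝓝[>] 0, 0 ≤ G t) (hq : 0 < q)
    (hκ : q < κ) (hlim : Tendsto (fun t => G t ^ q / t) (𝓝[>] 0) (𝓝 L)) :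
    Tendsto (fun t => G t ^ κ / t) (𝓝[>] 0) (𝓝 0) := by
  have hexp : 0 < κ / q - 1 := sub_pos.mpr ((one_lt_div hq).mpr hκ)
  have hpow : Tendsto (fun t => (G t ^ q / t) ^ (κ / q)) (𝓝[>] 0) (𝓝 (L ^ (κ / q))) :=
    (Real.continuousAt_rpow_const L _ (Or.inr (by linarith))).tendsto.comp hlim
  have hvanish : Tendsto (fun t : ℝ => t ^ (κ / q - 1)) (𝓝[>] 0) (𝓝 0) := by
    have := (Real.continuousAt_rpow_const 0 _ (Or.inr hexp.le)).tendsto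
    rw [Real.zero_rpow hexp.ne'] at this
    exact this.mono_left nhdsWithin_le_nhds
  have hprod := hpow.mul hvanish
  rw [mul_zero] at hprod
  refine hprod.congr' ?_
  filter_upwards [self_mem_nhdsWithin, hG] with t ht hGt
  exact (rpow_div_eq_rpow_div_rpow_mul_rpow hGt ht hq.ne').symm

theorem stmt_6_general {U : Type*} [AddCommGroup U] [Module ℝ U]
    (ξ : U →ₗ[ℝ] ℝ) (u udag : U) (Ω : U → ℝ) (G : ℝ → ℝ)
    (q t₀ β₁ β₂ κ : ℝ) (L_S : ℝ)
    (hξu : ξ u < 0) (hq : 0 < q) (ht₀ : 0 < t₀)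
    (hκ : q < κ)
    (hG : ∀ t, 0 ≤ t → 0 ≤ G t)
    (hΩlim : Filter.Tendsto (fun t => (Ω (udag + t • u) - Ω udag) / t)
      (nhdsWithin 0 (Set.Ioi 0)) (nhds (ξ u)))
    (hSlim : Filter.Tendsto (fun t => G t ^ q / t)
      (nhdsWithin 0 (Set.Ioi 0)) (nhds L_S))
    (hVI : ∀ t ∈ Set.Ioc (0 : ℝ) t₀,
      -ξ (t • u) ≤ β₁ * (Ω (udag + t • u) - Ω udag - ξ (t • u)) + β₂ * G t ^ κ) :
    False := by
  have hbound : ∀ᶠ t in 𝓝[>] 0,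
      -ξ u ≤ β₁ * ((Ω (udag + t • u) - Ω udag) / t - ξ u) + β₂ * (G t ^ κ / t) := by
    filter_upwards [Ioc_mem_nhdsGT ht₀] with t ht
    have hvi := hVI t ht
    rw [map_smul, smul_eq_mul] at hvi
    have ht0 : t ≠ 0 := ht.1.ne'
    calc -ξ u = -(t * ξ u) / t := by field_simp
      _ ≤ (β₁ * (Ω (udag + t • u) - Ω udag - t * ξ u) + β₂ * G t ^ κ) / t :=
        div_le_div_of_nonneg_right hvi ht.1.le
      _ = β₁ * ((Ω (udag + t • u) - Ω udag) / t - ξ u) + β₂ * (G t ^ κ / t) := by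
        field_simp
  have hΩ := hΩlim.sub_const (ξ u)
  rw [sub_self] at hΩ
  have hGpos : ∀ᶠ t in 𝓝[>] 0, 0 ≤ G t :=
    eventually_mem_nhdsWithin.mono fun t ht => hG t (le_of_lt ht)
  have hlim := (hΩ.const_mul β₁).add
    ((tendsto_rpow_div_nhdsGT_zero_of_tendsto_rpow_div hGpos hq hκ hSlim).const_mul β₂)
  rw [mul_zero, mul_zero, add_zero] at hlim
  linarith [ge_of_tendsto hlim hbound]

theorem stmt_6 {U : Type*} [AddCommGroup U] [Module ℝ U]
    (ξ : U →ₗ[ℝ] ℝ) (u udag : U) (Ω : U → ℝ) (G : ℝ → ℝ)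
    (q t₀ β₁ β₂ κ : ℝ) (L_S : ℝ)
    (hξu : ξ u < 0) (hq : 0 < q) (ht₀ : 0 < t₀)
    (hβ₁ : 0 ≤ β₁) (hβ₁' : β₁ < 1) (hβ₂ : 0 ≤ β₂) (hκ : q < κ)
    (hG : ∀ t, 0 ≤ t → 0 ≤ G t)
    (hΩlim : Filter.Tendsto (fun t => (Ω (udag + t • u) - Ω udag) / t)
      (nhdsWithin 0 (Set.Ioi 0)) (nhds (ξ u)))
    (hSlim : Filter.Tendsto (fun t => G t ^ q / t)
      (nhdsWithin 0 (Set.Ioi 0)) (nhds L_S))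
    (hVI : ∀ t ∈ Set.Ioc (0 : ℝ) t₀,
      -ξ (t • u) ≤ β₁ * (Ω (udag + t • u) - Ω udag - ξ (t • u)) + β₂ * G t ^ κ) :
    False :=
  stmt_6_general ξ u udag Ω G q t₀ β₁ β₂ κ L_S hξu hq ht₀ hκ hG hΩlim hSlim hVI
end

section
/- Error estimate (Lemma): suppose B ≥ 0, S ≥ 0, δ ≥ 0, α > 0, 0 < κ < p, β₁ ∈ [0,1), β₂ ≥ 0, s ≥ 1, γ ≥ 0, r ≥ 0, d(r) ≥ 0, and the chain of inequalities α·(1−β₁)·B ≤ 2δ^p + α·c_κ·β₂·r^γ·s^κ·δ^κ − δ^p + α·c_κ·β₂·r^γ·s^κ·S^κ − S^p + α·d(r) holds, where c_κ := 1 if κ < 1 and 2^{κ−1} if κ ≥ 1. Then B ≤ K₁·δ^p/α + K₂·α^{κ/(p−κ)}·r^{γp/(p−κ)} + K₃·d(r), with K₁ = 2/(1−β₁), K₂ = 2·(c_κ β₂ s^κ)^{p/(p−κ)}·(κ/p)^{κ/(p−κ)}·(p−κ)/(p(1−β₁)), K₃ = 1/(1−β₁). -/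
/-!
Both terms `M δ^κ - δ^p` and `M S^κ - S^p` of the chain, with `M = α c_κ β₂ r^γ s^κ`, are
bounded by the maximum of `t ↦ M t^κ - t^p`, which the weighted Young inequality with exponents
`p/κ` and `p/(p-κ)` computes. Since `M^{p/(p-κ)} = α · α^{κ/(p-κ)} (c_κ β₂ s^κ)^{p/(p-κ)} r^{γp/(p-κ)}`,
dividing by `α (1 - β₁)` gives the three terms of the estimate.
-/

open Real

/-- Young's inequality `ab ≤ a^p/p + b^q/q` applied to `a p^{1/p}` and `b p^{-1/p}`. -/
lemma mul_sub_rpow_le_of_holderConjugate {a b p q : ℝ} (hpq : p.HolderConjugate q)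
    (ha : 0 ≤ a) (hb : 0 ≤ b) :
    a * b - a ^ p ≤ b ^ q / (p ^ (q / p) * q) := by
  have hp : 0 < p := hpq.pos
  set c := p ^ (1 / p) with hc
  have hc0 : 0 < c := rpow_pos_of_pos hp _
  have hcp : c ^ p = p := by
    rw [hc, ← rpow_mul hp.le, one_div_mul_cancel hp.ne', rpow_one]
  have hcq : c ^ q = p ^ (q / p) := by
    rw [hc, ← rpow_mul hp.le, one_div_mul_eq_div]
  have young := young_inequality_of_nonneg (mul_nonneg ha hc0.le) (div_nonneg hb hc0.le) hpq
  have hab : a * c * (b / c) = a * b := by field_simp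
  have hap : (a * c) ^ p / p = a ^ p := by
    rw [mul_rpow ha hc0.le, hcp, mul_div_cancel_right₀ _ hp.ne']
  have hbq : (b / c) ^ q / q = b ^ q / (p ^ (q / p) * q) := by
    rw [div_rpow hb hc0.le, hcq, div_div]
  linarith

lemma mul_rpow_sub_rpow_le {κ p M t : ℝ} (hκ : 0 < κ) (hκp : κ < p) (hM : 0 ≤ M) (ht : 0 ≤ t) :
    M * t ^ κ - t ^ p ≤ M ^ (p / (p - κ)) * (κ / p) ^ (κ / (p - κ)) * ((p - κ) / p) := by
  have hp : 0 < p := hκ.trans hκp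
  have hconj : (p / κ).HolderConjugate (p / (p - κ)) := by
    refine (holderConjugate_iff_eq_conjExponent ?_).2 ?_
    · rw [lt_div_iff₀ hκ]; linarith
    · field_simp
  have young := mul_sub_rpow_le_of_holderConjugate hconj (rpow_nonneg ht κ) hM
  have hexp : p / (p - κ) / (p / κ) = κ / (p - κ) := by field_simp
  rw [← rpow_mul ht, mul_div_cancel₀ _ hκ.ne', hexp] at young
  calc M * t ^ κ - t ^ p = t ^ κ * M - t ^ p := by ring
    _ ≤ M ^ (p / (p - κ)) / ((p / κ) ^ (κ / (p - κ)) * (p / (p - κ))) := young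
    _ = M ^ (p / (p - κ)) * (κ / p) ^ (κ / (p - κ)) * ((p - κ) / p) := by
      rw [← inv_div κ p, inv_rpow (by positivity)]
      field_simp

lemma mul_mul_rpow_rpow_div_sub {α A r γ κ p : ℝ} (hα : 0 < α) (hA : 0 ≤ A) (hr : 0 ≤ r)
    (hκp : κ < p) :
    (α * A * r ^ γ) ^ (p / (p - κ)) =
      α * (α ^ (κ / (p - κ)) * A ^ (p / (p - κ)) * r ^ (γ * p / (p - κ))) := by
  have hexp : p / (p - κ) = κ / (p - κ) + 1 := by
    field_simp [(sub_pos.2 hκp).ne']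
    ring
  rw [mul_rpow (by positivity) (rpow_nonneg hr γ), mul_rpow hα.le hA, ← rpow_mul hr,
    mul_div_assoc γ, hexp, rpow_add hα, rpow_one]
  ring

theorem stmt_12_general (B S δ α κ p β₁ β₂ s γ r dr : ℝ)
    (hS : 0 ≤ S) (hδ : 0 ≤ δ) (hα : 0 < α)
    (hκ : 0 < κ) (hκp : κ < p) (hβ₁' : β₁ < 1)
    (hβ₂ : 0 ≤ β₂) (hs : 1 ≤ s) (hr : 0 ≤ r)
    (cκ : ℝ) (hcκ : cκ = if κ < 1 then (1 : ℝ) else 2 ^ (κ - 1))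
    (hchain : α * (1 - β₁) * B ≤
      2 * δ ^ p + α * cκ * β₂ * r ^ γ * s ^ κ * δ ^ κ - δ ^ p
        + α * cκ * β₂ * r ^ γ * s ^ κ * S ^ κ - S ^ p + α * dr) :
    B ≤ (2 / (1 - β₁)) * (δ ^ p / α)
      + (2 * (cκ * β₂ * s ^ κ) ^ (p / (p - κ)) * (κ / p) ^ (κ / (p - κ))
          * ((p - κ) / (p * (1 - β₁)))) * (α ^ (κ / (p - κ)) * r ^ (γ * p / (p - κ)))
      + (1 / (1 - β₁)) * dr := by
  have hβ : 0 < 1 - β₁ := by linarith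
  have hcκ0 : 0 ≤ cκ := by rw [hcκ]; split_ifs <;> positivity
  have hA : 0 ≤ cκ * β₂ * s ^ κ := by have := rpow_nonneg (zero_le_one.trans hs) κ; positivity
  set M := α * cκ * β₂ * r ^ γ * s ^ κ
  have hM' : M = α * (cκ * β₂ * s ^ κ) * r ^ γ := by ring
  have hM : 0 ≤ M := by have := rpow_nonneg hr γ; positivity
  set C := M ^ (p / (p - κ)) * (κ / p) ^ (κ / (p - κ)) * ((p - κ) / p) with hCdef
  have hbound : α * (1 - β₁) * B ≤ 2 * δ ^ p + 2 * C + α * dr := by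
    linarith [mul_rpow_sub_rpow_le hκ hκp hM hδ, mul_rpow_sub_rpow_le hκ hκp hM hS]
  rw [hCdef, hM', mul_mul_rpow_rpow_div_sub hα hA hr hκp] at hbound
  rw [← le_div_iff₀' (mul_pos hα hβ)] at hbound
  refine hbound.trans_eq ?_
  field_simp

theorem stmt_12 (B S δ α κ p β₁ β₂ s γ r dr : ℝ)
    (hB : 0 ≤ B) (hS : 0 ≤ S) (hδ : 0 ≤ δ) (hα : 0 < α)
    (hκ : 0 < κ) (hκp : κ < p) (hβ₁ : 0 ≤ β₁) (hβ₁' : β₁ < 1)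
    (hβ₂ : 0 ≤ β₂) (hs : 1 ≤ s) (hγ : 0 ≤ γ) (hr : 0 ≤ r) (hdr : 0 ≤ dr)
    (cκ : ℝ) (hcκ : cκ = if κ < 1 then (1 : ℝ) else 2 ^ (κ - 1))
    (hchain : α * (1 - β₁) * B ≤
      2 * δ ^ p + α * cκ * β₂ * r ^ γ * s ^ κ * δ ^ κ - δ ^ p
        + α * cκ * β₂ * r ^ γ * s ^ κ * S ^ κ - S ^ p + α * dr) :
    B ≤ (2 / (1 - β₁)) * (δ ^ p / α)
      + (2 * (cκ * β₂ * s ^ κ) ^ (p / (p - κ)) * (κ / p) ^ (κ / (p - κ))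
          * ((p - κ) / (p * (1 - β₁)))) * (α ^ (κ / (p - κ)) * r ^ (γ * p / (p - κ)))
      + (1 / (1 - β₁)) * dr :=
  stmt_12_general B S δ α κ p β₁ β₂ s γ r dr hS hδ hα hκ hκp hβ₁' hβ₂ hs hr cκ hcκ hchain
end

section
/- Suppose a variational inequality −ξ(u−u†) ≤ β₁·B(u) + β₂·S(u)^κ holds for all u ∈ M, with 0 < κ < μ. Then for every r > 0 and u ∈ M: −ξ(u−u†) − β₁·B(u) − β₂·r^γ·S(u)^μ ≤ (μ/κ)^{κ/(μ−κ)}·(μ/(μ−κ))·β₂·r^{−γκ/(μ−κ)}. Consequently the approximate-inequality distance function with exponent μ has majorant d̄(r) = a·r^{−bγ} with a = (μ/κ)^{κ/(μ−κ)}·(μ/(μ−κ))·β₂ and b = κ/(μ−κ). -/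
open Real

/- A crude case split already gives the bound with constant 1: either `t * s ^ (μ - κ) ≥ 1`, and
the left-hand side is nonpositive, or `s ^ (μ - κ) < t⁻¹`, and then `s ^ κ < t ^ (-(κ / (μ - κ)))`.
The constant `(μ / κ) ^ (κ / (μ - κ)) * (μ / (μ - κ))` coming from Young's inequality is at least 1. -/

lemma rpow_sub_mul_rpow_le {s t κ μ : ℝ} (hs : 0 ≤ s) (ht : 0 < t) (hκ : 0 < κ) (hκμ : κ < μ) :
    s ^ κ - t * s ^ μ ≤ t ^ (-(κ / (μ - κ))) := by
  have hμκ : 0 < μ - κ := sub_pos.mpr hκμ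
  have hsμ : s ^ μ = s ^ (μ - κ) * s ^ κ := by
    rw [← rpow_add' hs (by linarith)]
    ring_nf
  rcases le_or_gt 1 (t * s ^ (μ - κ)) with hlarge | hsmall
  · have : s ^ κ ≤ t * s ^ μ := by
      rw [hsμ, ← mul_assoc]
      exact le_mul_of_one_le_left (rpow_nonneg hs κ) hlarge
    linarith [rpow_nonneg ht.le (-(κ / (μ - κ)))]
  · have hlt : s ^ (μ - κ) < t⁻¹ := by
      rwa [← lt_div_iff₀' ht, one_div] at hsmall
    have hsκ : s ^ κ ≤ t ^ (-(κ / (μ - κ))) :=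
      calc s ^ κ = (s ^ (μ - κ)) ^ (κ / (μ - κ)) := by
            rw [← rpow_mul hs, mul_div_cancel₀ κ hμκ.ne']
        _ ≤ t⁻¹ ^ (κ / (μ - κ)) :=
            rpow_le_rpow (rpow_nonneg hs _) hlt.le (div_pos hκ hμκ).le
        _ = t ^ (-(κ / (μ - κ))) := by rw [inv_rpow ht.le, rpow_neg ht.le]
    linarith [mul_nonneg ht.le (rpow_nonneg hs μ)]

lemma one_le_young_constant {κ μ : ℝ} (hκ : 0 < κ) (hκμ : κ < μ) :
    1 ≤ (μ / κ) ^ (κ / (μ - κ)) * (μ / (μ - κ)) := by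
  have hμκ : 0 < μ - κ := sub_pos.mpr hκμ
  exact one_le_mul_of_one_le_of_one_le
    (one_le_rpow ((one_le_div hκ).mpr hκμ.le) (div_pos hκ hμκ).le)
    ((one_le_div hμκ).mpr (by linarith))

theorem stmt_16_general {U : Type*} [AddCommGroup U] [Module ℝ U]
    (ξ : U →ₗ[ℝ] ℝ) (udag : U) (M : Set U) (B S : U → ℝ)
    (β₁ β₂ κ μ γ : ℝ)
    (hβ₂ : 0 ≤ β₂)
    (hκ : 0 < κ) (hκμ : κ < μ)
    (hS : ∀ u ∈ M, 0 ≤ S u)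
    (hVI : ∀ u ∈ M, -ξ (u - udag) ≤ β₁ * B u + β₂ * S u ^ κ) :
    ∀ r > (0 : ℝ), ∀ u ∈ M,
      -ξ (u - udag) - β₁ * B u - β₂ * r ^ γ * S u ^ μ ≤
        (μ / κ) ^ (κ / (μ - κ)) * (μ / (μ - κ)) * β₂ * r ^ (-(γ * κ / (μ - κ))) := by
  intro r hr u hu
  have hpow : r ^ (-(γ * κ / (μ - κ))) = (r ^ γ) ^ (-(κ / (μ - κ))) := by
    rw [← rpow_mul hr.le]
    ring_nf
  have key := rpow_sub_mul_rpow_le (hS u hu) (rpow_pos_of_pos hr γ) hκ hκμ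
  rw [← hpow] at key
  calc -ξ (u - udag) - β₁ * B u - β₂ * r ^ γ * S u ^ μ
      ≤ β₂ * (S u ^ κ - r ^ γ * S u ^ μ) := by linarith [hVI u hu]
    _ ≤ β₂ * r ^ (-(γ * κ / (μ - κ))) := mul_le_mul_of_nonneg_left key hβ₂
    _ ≤ (μ / κ) ^ (κ / (μ - κ)) * (μ / (μ - κ)) * β₂ * r ^ (-(γ * κ / (μ - κ))) := by
      rw [mul_assoc _ β₂]
      exact le_mul_of_one_le_left (by positivity) (one_le_young_constant hκ hκμ)

theorem stmt_16 {U : Type*} [AddCommGroup U] [Module ℝ U]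
    (ξ : U →ₗ[ℝ] ℝ) (udag : U) (M : Set U) (B S : U → ℝ)
    (β₁ β₂ κ μ γ : ℝ)
    (hβ₁ : 0 ≤ β₁) (hβ₁' : β₁ < 1) (hβ₂ : 0 ≤ β₂)
    (hκ : 0 < κ) (hκμ : κ < μ) (hγ : 0 < γ)
    (hB : ∀ u ∈ M, 0 ≤ B u) (hS : ∀ u ∈ M, 0 ≤ S u)
    (hVI : ∀ u ∈ M, -ξ (u - udag) ≤ β₁ * B u + β₂ * S u ^ κ) :
    ∀ r > (0 : ℝ), ∀ u ∈ M,
      -ξ (u - udag) - β₁ * B u - β₂ * r ^ γ * S u ^ μ ≤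
        (μ / κ) ^ (κ / (μ - κ)) * (μ / (μ - κ)) * β₂ * r ^ (-(γ * κ / (μ - κ))) :=
  stmt_16_general ξ udag M B S β₁ β₂ κ μ γ hβ₂ hκ hκμ hS hVI
end

section
/- Approximate source condition implies approximate variational inequality (Banach spaces, case c₂ = 0): Let U, V be normed spaces, A : U → V a bounded linear operator, ξ ∈ U*, u† ∈ U. Suppose ‖F(u) − F(u†) − A(u−u†)‖ ≤ K‖F(u) − F(u†)‖^{c₁} for all u ∈ M, where 0 < c₁ ≤ 1, and ‖u − u†‖ ≤ K_ᾱ and ‖F(u) − F(u†)‖ ≤ (ρᾱ)^{1/p} for all u ∈ M. Define d̃(r) := inf{‖ξ − A*η‖ : η ∈ V*, ‖η‖ ≤ r} (infimum attained). Then for all u ∈ M and r ≥ 0: −ξ(u−u†) ≤ (K + (ρᾱ)^{(1−c₁)/p})·r·‖F(u)−F(u†)‖^{c₁} + K_ᾱ·d̃(r). -/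
/-! Choose `η` with `‖η‖ ≤ r` realising `d̃(r)`. Writing `x = u - u†` and `w = F u - F u†`,
`-ξ x = -(ξ - η ∘ A) x + η (w - A x) - η w`; the first term is at most `d̃(r) K_ᾱ`, the second
is controlled by the nonlinearity condition, and the third by
`‖w‖ = ‖w‖ ^ (1 - c₁) ‖w‖ ^ c₁ ≤ (ρᾱ) ^ ((1 - c₁) / p) ‖w‖ ^ c₁`. -/

open ContinuousLinearMap

theorem Real.le_rpow_mul_rpow_of_le_rpow_inv {t B p c : ℝ} (ht : 0 ≤ t) (hB : 0 ≤ B)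
    (hc : c ≤ 1) (htB : t ≤ B ^ (1 / p)) : t ≤ B ^ ((1 - c) / p) * t ^ c := by
  have hpow : t ^ (1 - c) ≤ B ^ ((1 - c) / p) :=
    calc t ^ (1 - c) ≤ (B ^ (1 / p)) ^ (1 - c) := Real.rpow_le_rpow ht htB (by linarith)
      _ = B ^ ((1 - c) / p) := by rw [← Real.rpow_mul hB, one_div_mul_eq_div]
  calc t = t ^ ((1 - c) + c) := by rw [sub_add_cancel, Real.rpow_one]
    _ = t ^ (1 - c) * t ^ c := Real.rpow_add' ht (by norm_num)
    _ ≤ B ^ ((1 - c) / p) * t ^ c := by gcongr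

theorem ContinuousLinearMap.neg_apply_le_opNorm_mul {E : Type*} [SeminormedAddCommGroup E]
    [NormedSpace ℝ E] (f : E →L[ℝ] ℝ) (x : E) : -f x ≤ ‖f‖ * ‖x‖ :=
  (neg_le_abs _).trans (f.le_opNorm x)

theorem ContinuousLinearMap.apply_le_opNorm_mul {E : Type*} [SeminormedAddCommGroup E]
    [NormedSpace ℝ E] (f : E →L[ℝ] ℝ) (x : E) : f x ≤ ‖f‖ * ‖x‖ :=
  (le_abs_self _).trans (f.le_opNorm x)

theorem ContinuousLinearMap.neg_apply_le_norm_sub_comp {U V : Type*} [SeminormedAddCommGroup U]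
    [NormedSpace ℝ U] [SeminormedAddCommGroup V] [NormedSpace ℝ V]
    (A : U →L[ℝ] V) (ξ : U →L[ℝ] ℝ) (η : V →L[ℝ] ℝ) (x : U) (w : V) :
    -ξ x ≤ ‖η‖ * (‖w - A x‖ + ‖w‖) + ‖ξ - η.comp A‖ * ‖x‖ := by
  have hsplit : -ξ x = η (w - A x) + -η w + -(ξ - η.comp A) x := by
    simp only [map_sub, sub_apply, comp_apply]
    ring
  rw [hsplit, mul_add]
  gcongr
  · exact η.apply_le_opNorm_mul _
  · exact η.neg_apply_le_opNorm_mul w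
  · exact (ξ - η.comp A).neg_apply_le_opNorm_mul x

theorem stmt_18_general {U V : Type*} [NormedAddCommGroup U] [NormedSpace ℝ U]
    [NormedAddCommGroup V] [NormedSpace ℝ V]
    (A : U →L[ℝ] V) (ξ : U →L[ℝ] ℝ) (udag : U) (M : Set U) (F : U → V)
    (K Kᾱ ρ ᾱ p c₁ : ℝ)
    (hρ : 0 < ρ) (hᾱ : 0 < ᾱ)
    (hc₁' : c₁ ≤ 1)
    (hnl : ∀ u ∈ M, ‖F u - F udag - A (u - udag)‖ ≤ K * ‖F u - F udag‖ ^ c₁)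
    (hub : ∀ u ∈ M, ‖u - udag‖ ≤ Kᾱ)
    (hFb : ∀ u ∈ M, ‖F u - F udag‖ ≤ (ρ * ᾱ) ^ (1 / p))
    (dtil : ℝ → ℝ)
    (hdtil : ∀ r ≥ (0 : ℝ), ∃ η : V →L[ℝ] ℝ, ‖η‖ ≤ r ∧ ‖ξ - η.comp A‖ = dtil r) :
    ∀ u ∈ M, ∀ r ≥ (0 : ℝ),
      -ξ (u - udag) ≤
        (K + (ρ * ᾱ) ^ ((1 - c₁) / p)) * r * ‖F u - F udag‖ ^ c₁ + Kᾱ * dtil r := by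
  intro u hu r hr
  obtain ⟨η, hηr, hη⟩ := hdtil r hr
  have hw : ‖F u - F udag‖ ≤ (ρ * ᾱ) ^ ((1 - c₁) / p) * ‖F u - F udag‖ ^ c₁ :=
    Real.le_rpow_mul_rpow_of_le_rpow_inv (norm_nonneg _) (mul_pos hρ hᾱ).le hc₁' (hFb u hu)
  have hsum : ‖F u - F udag - A (u - udag)‖ + ‖F u - F udag‖
      ≤ (K + (ρ * ᾱ) ^ ((1 - c₁) / p)) * ‖F u - F udag‖ ^ c₁ := by
    linarith [hnl u hu]
  calc -ξ (u - udag)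
      ≤ ‖η‖ * (‖F u - F udag - A (u - udag)‖ + ‖F u - F udag‖)
          + ‖ξ - η.comp A‖ * ‖u - udag‖ := A.neg_apply_le_norm_sub_comp ξ η _ _
    _ ≤ r * ((K + (ρ * ᾱ) ^ ((1 - c₁) / p)) * ‖F u - F udag‖ ^ c₁) + dtil r * Kᾱ := by
        rw [← hη]
        gcongr
        exact hub u hu
    _ = _ := by ring

theorem stmt_18 {U V : Type*} [NormedAddCommGroup U] [NormedSpace ℝ U]
    [NormedAddCommGroup V] [NormedSpace ℝ V]
    (A : U →L[ℝ] V) (ξ : U →L[ℝ] ℝ) (udag : U) (M : Set U) (F : U → V)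
    (K Kᾱ ρ ᾱ p c₁ : ℝ)
    (hK : 0 < K) (hKᾱ : 0 < Kᾱ) (hρ : 0 < ρ) (hᾱ : 0 < ᾱ) (hp : 0 < p)
    (hc₁ : 0 < c₁) (hc₁' : c₁ ≤ 1)
    (hnl : ∀ u ∈ M, ‖F u - F udag - A (u - udag)‖ ≤ K * ‖F u - F udag‖ ^ c₁)
    (hub : ∀ u ∈ M, ‖u - udag‖ ≤ Kᾱ)
    (hFb : ∀ u ∈ M, ‖F u - F udag‖ ≤ (ρ * ᾱ) ^ (1 / p))
    (dtil : ℝ → ℝ)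
    (hdtil : ∀ r ≥ (0 : ℝ), ∃ η : V →L[ℝ] ℝ, ‖η‖ ≤ r ∧ ‖ξ - η.comp A‖ = dtil r) :
    ∀ u ∈ M, ∀ r ≥ (0 : ℝ),
      -ξ (u - udag) ≤
        (K + (ρ * ᾱ) ^ ((1 - c₁) / p)) * r * ‖F u - F udag‖ ^ c₁ + Kᾱ * dtil r :=
  stmt_18_general A ξ udag M F K Kᾱ ρ ᾱ p c₁ hρ hᾱ hc₁' hnl hub hFb dtil hdtil
end
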